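/- arXiv:1305.0363 — 2 statements merged into one kernel-verified Lean document; each statement's English description precedes it below -/
import Mathlib

section
/- If S1 is a metric generator for connected graph G and S2 is a metric generator for connected graph H, then (V(G) × S2) ∪ (S1 × V(H)) is a metric generator for the strong product G ⊠ H. -/
open SimpleGraph

/-- The strong product of two simple graphs. -/
def strongProd {α β : Type*} (G : SimpleGraph α) (H : SimpleGraph β) :
    SimpleGraph (α × β) where
  Adj x y := x ≠ y ∧ (x.1 = y.1 ∨ G.Adj x.1 y.1) ∧ (x.2 = y.2 ∨ H.Adj x.2 y.2)
  symm := by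
    refine ⟨?_⟩
    rintro ⟨a, b⟩ ⟨c, d⟩ ⟨hne, h1, h2⟩
    refine ⟨hne.symm, ?_, ?_⟩
    · rcases h1 with h | h
      · exact Or.inl h.symm
      · exact Or.inr h.symm
    · rcases h2 with h | h
      · exact Or.inl h.symm
      · exact Or.inr h.symm
  loopless := by refine ⟨?_⟩; rintro ⟨a, b⟩ ⟨hne, -, -⟩; exact hne rfl

/-- A set `S` is a metric generator for `G` if every pair of distinct vertices is
distinguished by some element of `S`. -/
def IsMetricGen {α : Type*} (G : SimpleGraph α) (S : Set α) : Prop :=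
  ∀ x y : α, x ≠ y → ∃ s ∈ S, G.dist x s ≠ G.dist y s

/-- The metric dimension of a graph: minimum cardinality of a metric generator. -/
noncomputable def metricDim {α : Type*} (G : SimpleGraph α) : ℕ :=
  sInf {n | ∃ S : Set α, IsMetricGen G S ∧ S.ncard = n}

/-- `G` is self `k`-resolved if for all distinct `x, y` there is `w` such that
`d(y,w) ≥ k` and `x` lies on a shortest `y`–`w` path, or symmetrically. -/
def SelfResolved {α : Type*} (G : SimpleGraph α) (k : ℕ) : Prop :=
  ∀ x y : α, x ≠ y → ∃ w : α,
    (k ≤ G.dist y w ∧ G.dist y x + G.dist x w = G.dist y w) ∨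
    (k ≤ G.dist x w ∧ G.dist x y + G.dist y w = G.dist x w)

/-- Two vertices are true twins if their closed neighborhoods coincide. -/
def TrueTwins {α : Type*} (G : SimpleGraph α) (u v : α) : Prop :=
  insert u (G.neighborSet u) = insert v (G.neighborSet v)

/-- The number of equivalence classes of the true twin relation. -/
noncomputable def numTrueTwinClasses {α : Type*} (G : SimpleGraph α) : ℕ :=
  Nat.card (Quotient (Setoid.ker (fun v => insert v (G.neighborSet v))))

/-
Proof idea: in `G ⊠ H` a walk moves in both coordinates at once, so
`d((a,b),(c,d)) = max (d_G(a,c)) (d_H(b,d))`. Two vertices differing in the first coordinate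
only are told apart by `(s,b)` with `s ∈ S1` resolving them in `G`. Otherwise some `t ∈ S2`
has `d_H(b,t) < d_H(d,t)`, say; then `(a,t)` is at distance `d_H(b,t)` from `(a,b)` but at
least `d_H(d,t)` from `(c,d)`.
-/

theorem SimpleGraph.Walk.exists_walk_length_le_of_adj {V W : Type*} {G' : SimpleGraph V}
    {K : SimpleGraph W} (f : V → W) (hf : ∀ ⦃u v⦄, G'.Adj u v → f u = f v ∨ K.Adj (f u) (f v))
    {u v : V} (w : G'.Walk u v) : ∃ p : K.Walk (f u) (f v), p.length ≤ w.length := by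
  induction w with
  | nil => exact ⟨.nil, le_rfl⟩
  | @cons u u' v h w ih =>
    obtain ⟨p, hp⟩ := ih
    rcases hf h with heq | hadj
    · exact ⟨p.copy heq.symm rfl, by simp only [Walk.length_copy, Walk.length_cons]; omega⟩
    · exact ⟨.cons hadj p, by simpa using hp⟩

section StrongProd

variable {α β : Type*} {G : SimpleGraph α} {H : SimpleGraph β}

theorem strongProd_adj {x y : α × β} :
    (strongProd G H).Adj x y ↔
      x ≠ y ∧ (x.1 = y.1 ∨ G.Adj x.1 y.1) ∧ (x.2 = y.2 ∨ H.Adj x.2 y.2) :=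
  Iff.rfl

def strongProdLeft (b : β) : G →g strongProd G H where
  toFun a := (a, b)
  map_rel' h := strongProd_adj.2 ⟨by simp [h.ne], Or.inr h, Or.inl rfl⟩

def strongProdRight (a : α) : H →g strongProd G H where
  toFun b := (a, b)
  map_rel' h := strongProd_adj.2 ⟨by simp [h.ne], Or.inl rfl, Or.inr h⟩

theorem exists_strongProd_walk_length_eq_max {a c : α} {d : β} (p : G.Walk a c) :
    ∀ {b : β} (q : H.Walk b d),
      ∃ w : (strongProd G H).Walk (a, b) (c, d), w.length = max p.length q.length := by
  induction p with
  | nil => exact fun q => ⟨q.map (strongProdRight _), q.length_map _⟩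
  | @cons a a' c hG p ih =>
    intro b q
    cases q with
    | nil => exact ⟨_, ((Walk.cons hG p).length_map (strongProdLeft _)).trans (by simp)⟩
    | @cons b b' d hH q =>
      obtain ⟨w, hw⟩ := ih q
      have hadj : (strongProd G H).Adj (a, b) (a', b') :=
        ⟨by simp [hG.ne], Or.inr hG, Or.inr hH⟩
      exact ⟨.cons hadj w, by simp [hw, Nat.succ_max_succ]⟩

theorem dist_fst_le_length {x y : α × β} (w : (strongProd G H).Walk x y) :
    G.dist x.1 y.1 ≤ w.length :=
  let ⟨p, hp⟩ := Walk.exists_walk_length_le_of_adj (G' := strongProd G H) Prod.fst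
    (fun _ _ h => h.2.1) w
  (dist_le p).trans hp

theorem dist_snd_le_length {x y : α × β} (w : (strongProd G H).Walk x y) :
    H.dist x.2 y.2 ≤ w.length :=
  let ⟨p, hp⟩ := Walk.exists_walk_length_le_of_adj (G' := strongProd G H) Prod.snd
    (fun _ _ h => h.2.2) w
  (dist_le p).trans hp

theorem strongProd_dist {a c : α} {b d : β} (hac : G.Reachable a c) (hbd : H.Reachable b d) :
    (strongProd G H).dist (a, b) (c, d) = max (G.dist a c) (H.dist b d) := by
  obtain ⟨p, hp⟩ := hac.exists_walk_length_eq_dist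
  obtain ⟨q, hq⟩ := hbd.exists_walk_length_eq_dist
  obtain ⟨w, hw⟩ := exists_strongProd_walk_length_eq_max p q
  apply le_antisymm
  · simpa [hw, hp, hq] using dist_le w
  · obtain ⟨w', hw'⟩ := (Walk.reachable w).exists_walk_length_eq_dist
    exact max_le (hw' ▸ dist_fst_le_length w') (hw' ▸ dist_snd_le_length w')

theorem strongProd_dist_lt_of_dist_lt (hG : G.Connected) (hH : H.Connected) (a c : α)
    {b d t : β} (h : H.dist b t < H.dist d t) :
    (strongProd G H).dist (a, b) (a, t) < (strongProd G H).dist (c, d) (a, t) := by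
  rw [strongProd_dist (hG.preconnected _ _) (hH.preconnected _ _),
    strongProd_dist (hG.preconnected _ _) (hH.preconnected _ _), dist_self, Nat.zero_max]
  exact lt_max_of_lt_right h

end StrongProd

theorem stmt_2 {α β : Type*} (G : SimpleGraph α) (H : SimpleGraph β)
    (hG : G.Connected) (hH : H.Connected) (S1 : Set α) (S2 : Set β)
    (h1 : IsMetricGen G S1) (h2 : IsMetricGen H S2) :
    IsMetricGen (strongProd G H) ((Set.univ ×ˢ S2) ∪ (S1 ×ˢ Set.univ)) := by
  rintro ⟨a, b⟩ ⟨c, d⟩ hne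
  rcases eq_or_ne b d with rfl | hbd
  · have hac : a ≠ c := by rintro rfl; exact hne rfl
    obtain ⟨s, hs, hds⟩ := h1 a c hac
    refine ⟨(s, b), Or.inr ⟨hs, trivial⟩, ?_⟩
    simpa [strongProd_dist (hG.preconnected _ _) (hH.preconnected _ _)] using hds
  · obtain ⟨t, ht, hdt⟩ := h2 b d hbd
    rcases hdt.lt_or_gt with hlt | hlt
    · exact ⟨(a, t), Or.inl ⟨trivial, ht⟩, (strongProd_dist_lt_of_dist_lt hG hH a c hlt).ne⟩
    · exact ⟨(c, t), Or.inl ⟨trivial, ht⟩, (strongProd_dist_lt_of_dist_lt hG hH c a hlt).ne'⟩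
end

section
/- Let H be a connected graph of order n2 and let G be a nontrivial connected graph of order n1 with t1 true twin equivalence classes. Then dim(G ⊠ H) ≥ n2·(n1 − t1). -/
open SimpleGraph

/-!
A metric generator must contain one of any two distinct true twins `x, y`: every other vertex `s`
is at the same distance from both, since a shortest path from `y` to `s` can be rerouted through
`x` without getting longer, and vice versa. True twins in `G` stay true twins in `G ⊠ H` (the
closed neighbourhoods of the strong product are products of closed neighbourhoods), so a metric
generator misses at most one vertex of each fibre `C × {b}` over a twin class `C` of `G`; hence
its complement has at most `t₁ n₂` vertices.
-/
section

variable {α β : Type*}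

lemma insert_neighborSet_strongProd (G : SimpleGraph α) (H : SimpleGraph β) (a : α) (b : β) :
    insert (a, b) ((strongProd G H).neighborSet (a, b)) =
      insert a (G.neighborSet a) ×ˢ insert b (H.neighborSet b) := by
  ext ⟨x, y⟩
  simp only [Set.mem_insert_iff, mem_neighborSet, Set.mem_prod, strongProd, Prod.mk.injEq]
  by_cases hxy : x = a ∧ y = b
  · simp [hxy]
  · have hne : (a, b) ≠ (x, y) := fun h => hxy (by simp_all [Prod.ext_iff, eq_comm])
    simp only [hxy, ne_eq, hne, not_false_eq_true, true_and, false_or]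
    tauto

lemma boxProd_le_strongProd (G : SimpleGraph α) (H : SimpleGraph β) :
    G.boxProd H ≤ strongProd G H := by
  rintro ⟨a, b⟩ ⟨a', b'⟩ (⟨h, rfl⟩ | ⟨h, rfl⟩)
  · exact ⟨by simp [h.ne], Or.inr h, Or.inl rfl⟩
  · exact ⟨by simp [h.ne], Or.inl rfl, Or.inr h⟩

lemma SimpleGraph.Connected.strongProd {G : SimpleGraph α} {H : SimpleGraph β} (hG : G.Connected)
    (hH : H.Connected) : (strongProd G H).Connected :=
  (hG.boxProd hH).mono (boxProd_le_strongProd G H)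

lemma TrueTwins.strongProd {G : SimpleGraph α} {a a' : α} (h : TrueTwins G a a')
    (H : SimpleGraph β) (b : β) : TrueTwins (strongProd G H) (a, b) (a', b) := by
  unfold TrueTwins at *
  rw [insert_neighborSet_strongProd, insert_neighborSet_strongProd, h]

lemma TrueTwins.dist_le {G : SimpleGraph α} (hG : G.Connected) {x y s : α}
    (h : TrueTwins G x y) (hs : s ≠ y) : G.dist x s ≤ G.dist y s := by
  obtain ⟨p, hp⟩ := hG.exists_walk_length_eq_dist y s
  cases p with
  | nil => exact absurd rfl hs
  | @cons _ w _ hyw q =>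
    have hw : w ∈ insert x (G.neighborSet x) := h ▸ Set.mem_insert_of_mem _ hyw
    rw [← hp, Walk.length_cons]
    rcases hw with rfl | hxw
    · exact (SimpleGraph.dist_le q).trans (Nat.le_succ _)
    · exact SimpleGraph.dist_le (Walk.cons hxw q)

lemma TrueTwins.dist_eq {G : SimpleGraph α} (hG : G.Connected) {x y s : α}
    (h : TrueTwins G x y) (hsx : s ≠ x) (hsy : s ≠ y) : G.dist x s = G.dist y s :=
  (h.dist_le hG hsy).antisymm (TrueTwins.dist_le hG h.symm hsx)

lemma IsMetricGen.mem_or_mem_of_trueTwins {G : SimpleGraph α} {S : Set α} (hS : IsMetricGen G S)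
    (hG : G.Connected) {x y : α} (h : TrueTwins G x y) (hxy : x ≠ y) : x ∈ S ∨ y ∈ S := by
  by_contra! hxyS
  obtain ⟨s, hs, hsd⟩ := hS x y hxy
  exact hsd (h.dist_eq hG (ne_of_mem_of_not_mem hs hxyS.1) (ne_of_mem_of_not_mem hs hxyS.2))

lemma isMetricGen_univ {G : SimpleGraph α} (hG : G.Connected) : IsMetricGen G Set.univ :=
  fun x y hxy => ⟨x, trivial, by simpa using (hG.pos_dist_of_ne hxy.symm).ne⟩

lemma le_metricDim {G : SimpleGraph α} (hG : G.Connected) {k : ℕ}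
    (hk : ∀ S, IsMetricGen G S → k ≤ S.ncard) : k ≤ metricDim G :=
  le_csInf ⟨_, _, isMetricGen_univ hG, rfl⟩ (by rintro n ⟨S, hS, rfl⟩; exact hk S hS)

lemma IsMetricGen.injOn_compl {G : SimpleGraph α} {H : SimpleGraph β} {S : Set (α × β)}
    (hS : IsMetricGen (strongProd G H) S) (hGH : (strongProd G H).Connected) :
    Set.InjOn (fun p ↦ (Quotient.mk (Setoid.ker fun v ↦ insert v (G.neighborSet v)) p.1, p.2))
      Sᶜ := by
  rintro ⟨a, b⟩ hab ⟨a', b'⟩ hab' h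
  obtain ⟨hq, rfl⟩ := Prod.ext_iff.mp h
  have htwins : TrueTwins G a a' := Quotient.exact hq
  by_contra hne
  rcases hS.mem_or_mem_of_trueTwins hGH (htwins.strongProd H b) hne with h | h
  exacts [hab h, hab' h]

lemma IsMetricGen.ncard_compl_le [Fintype α] [Fintype β] {G : SimpleGraph α} {H : SimpleGraph β}
    {S : Set (α × β)} (hS : IsMetricGen (strongProd G H) S) (hGH : (strongProd G H).Connected) :
    Sᶜ.ncard ≤ numTrueTwinClasses G * Fintype.card β := by
  calc Sᶜ.ncard ≤ (Set.univ : Set (Quotient _ × β)).ncard :=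
        Set.ncard_le_ncard_of_injOn _ (fun _ _ ↦ trivial) (hS.injOn_compl hGH)
    _ = numTrueTwinClasses G * Fintype.card β := by
        rw [Set.ncard_univ, Nat.card_prod, Nat.card_eq_fintype_card (α := β), numTrueTwinClasses]

end

theorem stmt_11_general {α β : Type*} [Fintype α] [Fintype β]
    (G : SimpleGraph α) (H : SimpleGraph β) (hG : G.Connected) (hH : H.Connected) :
    Fintype.card β * (Fintype.card α - numTrueTwinClasses G) ≤
      metricDim (strongProd G H) := by
  have hGH := hG.strongProd hH
  refine le_metricDim hGH fun S hS ↦ ?_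
  have hcompl := hS.ncard_compl_le hGH
  have htotal : S.ncard + Sᶜ.ncard = Fintype.card α * Fintype.card β := by
    rw [Set.ncard_add_ncard_compl, Nat.card_eq_fintype_card, Fintype.card_prod]
  rw [Nat.mul_sub]
  refine Nat.sub_le_of_le_add ?_
  linarith

theorem stmt_11 {α β : Type*} [Fintype α] [Fintype β] [Nontrivial α]
    (G : SimpleGraph α) (H : SimpleGraph β) (hG : G.Connected) (hH : H.Connected) :
    Fintype.card β * (Fintype.card α - numTrueTwinClasses G) ≤
      metricDim (strongProd G H) :=
  stmt_11_general G H hG hH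
end
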